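/- arXiv:2308.05814 — 2 statements merged into one kernel-verified Lean document; each statement's English description precedes it below -/
import Mathlib

section
/- Let Ω ∈ ℝ^{n×ℓ} (k ≤ ℓ ≤ n) and set Z = Σ⊥ Ω̂₂. Suppose that ‖(1/ℓ) Z Zᵀ − Σ⊥Σ⊥ᵀ‖₂ ≤ η ‖Σ⊥‖₂² and ‖(1/ℓ) Ω̂₁ Ω̂₁ᵀ − I_k‖₂ ≤ ε, for some η > 0 and ε ∈ (0,1). Then ‖Σ⊥ Ω̂₂ Ω̂₁†‖₂² ≤ ( ‖(1/ℓ) Z Zᵀ − Σ⊥Σ⊥ᵀ‖₂ + ‖Σ⊥‖₂² ) / ( 1 − ‖(1/ℓ) Ω̂₁ Ω̂₁ᵀ − I_k‖₂ ) ≤ ‖Σ⊥‖₂² (1+η)/(1−ε). -/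
open MeasureTheory Matrix

noncomputable section

/-- Spectral norm (largest singular value) of a real matrix. -/
def spec {m n : ℕ} (A : Matrix (Fin m) (Fin n) ℝ) : ℝ :=
  ‖LinearMap.toContinuousLinearMap (Matrix.toEuclideanLin A)‖

/- Moore–Penrose pseudoinverse, via the four Penrose conditions. -/
open scoped Classical in
def pinv {m n : ℕ} (A : Matrix (Fin m) (Fin n) ℝ) : Matrix (Fin n) (Fin m) ℝ :=
  if h : ∃ B : Matrix (Fin n) (Fin m) ℝ,
      A * B * A = A ∧ B * A * B = B ∧ (A * B)ᵀ = A * B ∧ (B * A)ᵀ = B * A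
  then h.choose else 0

/-- The first `k` columns of an `n×n` matrix. -/
def colsLeft {n : ℕ} (k : ℕ) (h : k ≤ n) (V : Matrix (Fin n) (Fin n) ℝ) :
    Matrix (Fin n) (Fin k) ℝ :=
  Matrix.of fun i j => V i (Fin.castLE h j)

/-- The last `n - k` columns of an `n×n` matrix. -/
def colsRight {n : ℕ} (k : ℕ) (V : Matrix (Fin n) (Fin n) ℝ) :
    Matrix (Fin n) (Fin (n - k)) ℝ :=
  Matrix.of fun i j => V i ⟨k + j.1, by have := j.isLt; omega⟩

/-- The trailing diagonal block `Σ⊥ = diag(σ_{k+1},…,σ_n)`. -/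
def tailDiag {n : ℕ} (k : ℕ) (σ : Fin n → ℝ) :
    Matrix (Fin (n - k)) (Fin (n - k)) ℝ :=
  Matrix.diagonal fun j => σ ⟨k + j.1, by have := j.isLt; omega⟩

/-!
Write `A = Ω̂₁`, `B = A†`, `Z = Σ⊥ Ω̂₂` and `s = 1/ℓ`, and bound `‖Z B‖ ≤ ‖Z‖ ‖B‖`.
The first factor: `‖Z‖² = ‖Z Zᵀ‖ = ‖s Z Zᵀ‖ / s ≤ (‖s Z Zᵀ − Σ⊥Σ⊥ᵀ‖ + ‖Σ⊥‖²) / s`.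
The second: with `δ = ‖s A Aᵀ − I‖ < 1`, the Gram matrix `G = A Aᵀ` satisfies
`⟪G v, v⟫ ≥ (1 − δ)/s · ‖v‖²`, so it is invertible and `Aᵀ G⁻¹` is a Moore–Penrose inverse of `A`.
The Penrose identities give `B = Aᵀ X` with `X = Bᵀ B`, hence `X = X G X`, and then
`(1 − δ)/s · ‖X y‖² ≤ ⟪G X y, X y⟫ = ⟪X y, y⟫ ≤ ‖X y‖ ‖y‖` yields `‖B‖² = ‖X‖ ≤ s / (1 − δ)`.
-/

open scoped Matrix.Norms.L2Operator RealInnerProductSpace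

namespace ContinuousLinearMap

variable {H : Type*} [NormedAddCommGroup H] [InnerProductSpace ℝ H]

theorem one_sub_norm_smul_sub_one_mul_sq_le_inner (G : H →L[ℝ] H) (s : ℝ) (v : H) :
    (1 - ‖s • G - 1‖) * ‖v‖ ^ 2 ≤ s * ⟪G v, v⟫ := by
  have hquad : ⟪(s • G - 1) v, v⟫ = s * ⟪G v, v⟫ - ‖v‖ ^ 2 := by
    simp only [_root_.sub_apply, _root_.smul_apply, one_apply_eq_self, inner_sub_left,
      real_inner_smul_left, real_inner_self_eq_norm_sq]
  have hlow : -(‖s • G - 1‖ * ‖v‖ ^ 2) ≤ ⟪(s • G - 1) v, v⟫ := by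
    refine neg_le_of_abs_le ((abs_real_inner_le_norm _ _).trans ?_)
    calc ‖(s • G - 1) v‖ * ‖v‖ ≤ ‖s • G - 1‖ * ‖v‖ * ‖v‖ := by gcongr; exact le_opNorm _ _
      _ = ‖s • G - 1‖ * ‖v‖ ^ 2 := by ring
  linarith

variable [CompleteSpace H]

theorem norm_le_inv_of_mul_mul_eq_self {X G : H →L[ℝ] H} (hX : IsSelfAdjoint X)
    (hXGX : X * G * X = X) {c : ℝ} (hc : 0 < c) (hG : ∀ v, c * ‖v‖ ^ 2 ≤ ⟪G v, v⟫) :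
    ‖X‖ ≤ c⁻¹ := by
  refine opNorm_le_bound _ (inv_nonneg.2 hc.le) fun y => ?_
  have key : c * ‖X y‖ ^ 2 ≤ ‖X y‖ * ‖y‖ :=
    calc c * ‖X y‖ ^ 2 ≤ ⟪G (X y), X y⟫ := hG _
      _ = ⟪X (G (X y)), y⟫ := by
        rw [← adjoint_inner_left, hX.adjoint_eq]
      _ = ⟪X y, y⟫ := by rw [show X (G (X y)) = X y from DFunLike.congr_fun hXGX y]
      _ ≤ ‖X y‖ * ‖y‖ := real_inner_le_norm _ _
  rw [inv_mul_eq_div, le_div_iff₀ hc]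
  rcases (norm_nonneg (X y)).eq_or_lt with h0 | hpos
  · rw [← h0, zero_mul]
    exact norm_nonneg y
  · exact le_of_mul_le_mul_left (by nlinarith) hpos

end ContinuousLinearMap

namespace Matrix

variable {m n p : Type*} [Fintype m] [Fintype n] [Fintype p]

theorem l2_opNorm_transpose [DecidableEq m] [DecidableEq n] (A : Matrix m n ℝ) :
    ‖Aᵀ‖ = ‖A‖ := by
  rw [← conjTranspose_eq_transpose_of_trivial, l2_opNorm_conjTranspose]

theorem l2_opNorm_transpose_mul_self [DecidableEq n] (A : Matrix m n ℝ) :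
    ‖Aᵀ * A‖ = ‖A‖ ^ 2 := by
  rw [← conjTranspose_eq_transpose_of_trivial, l2_opNorm_conjTranspose_mul_self, sq]

theorem l2_opNorm_mul_transpose_self [DecidableEq m] [DecidableEq n] (A : Matrix m n ℝ) :
    ‖A * Aᵀ‖ = ‖A‖ ^ 2 := by
  simpa [l2_opNorm_transpose] using l2_opNorm_transpose_mul_self Aᵀ

theorem l2_opNorm_sq_le_of_smul_mul_transpose [DecidableEq m] [DecidableEq n] [DecidableEq p]
    (Z : Matrix m n ℝ) (S : Matrix m p ℝ) {s : ℝ} (hs : 0 < s) :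
    ‖Z‖ ^ 2 ≤ (‖s • (Z * Zᵀ) - S * Sᵀ‖ + ‖S‖ ^ 2) / s := by
  rw [le_div_iff₀ hs]
  calc ‖Z‖ ^ 2 * s = ‖s • (Z * Zᵀ)‖ := by
        rw [norm_smul, l2_opNorm_mul_transpose_self, Real.norm_of_nonneg hs.le, mul_comm]
    _ ≤ ‖s • (Z * Zᵀ) - S * Sᵀ‖ + ‖S * Sᵀ‖ := norm_le_norm_sub_add _ _
    _ = ‖s • (Z * Zᵀ) - S * Sᵀ‖ + ‖S‖ ^ 2 := by rw [l2_opNorm_mul_transpose_self]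

def IsMoorePenroseInverse (A : Matrix m n ℝ) (B : Matrix n m ℝ) : Prop :=
  A * B * A = A ∧ B * A * B = B ∧ (A * B)ᵀ = A * B ∧ (B * A)ᵀ = B * A

theorem isMoorePenroseInverse_transpose_mul_inv [DecidableEq m] {A : Matrix m n ℝ}
    (hA : IsUnit (A * Aᵀ)) : A.IsMoorePenroseInverse (Aᵀ * (A * Aᵀ)⁻¹) := by
  have hdet : IsUnit (A * Aᵀ).det := (isUnit_iff_isUnit_det _).1 hA
  have hright : A * (Aᵀ * (A * Aᵀ)⁻¹) = 1 := by
    rw [← Matrix.mul_assoc, mul_nonsing_inv _ hdet]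
  have hsymm : ((A * Aᵀ)⁻¹)ᵀ = (A * Aᵀ)⁻¹ := by
    rw [transpose_nonsing_inv, transpose_mul, transpose_transpose]
  refine ⟨by rw [hright, Matrix.one_mul], by rw [Matrix.mul_assoc, hright, Matrix.mul_one],
    by rw [hright, transpose_one], ?_⟩
  rw [transpose_mul, transpose_mul, transpose_transpose, hsymm, Matrix.mul_assoc]

theorem IsMoorePenroseInverse.transpose_mul_self_mul_mul_eq {A : Matrix m n ℝ}
    {B : Matrix n m ℝ} (h : A.IsMoorePenroseInverse B) :
    Bᵀ * B * (A * Aᵀ) * (Bᵀ * B) = Bᵀ * B := by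
  obtain ⟨-, hBAB, -, hBA⟩ := h
  have hB : B = Aᵀ * (Bᵀ * B) := by
    conv_lhs => rw [← hBAB, ← hBA, transpose_mul]
    simp only [Matrix.mul_assoc]
  calc Bᵀ * B * (A * Aᵀ) * (Bᵀ * B) = (Aᵀ * (Bᵀ * B))ᵀ * (Aᵀ * (Bᵀ * B)) := by
        simp only [transpose_mul, transpose_transpose, Matrix.mul_assoc]
    _ = Bᵀ * B := by rw [← hB]

end Matrix

open ContinuousLinearMap

theorem isMoorePenroseInverse_pinv {a b : ℕ} {A : Matrix (Fin a) (Fin b) ℝ}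
    {B : Matrix (Fin b) (Fin a) ℝ} (hB : A.IsMoorePenroseInverse B) :
    A.IsMoorePenroseInverse (pinv A) := by
  unfold pinv
  split_ifs with h
  · exact h.choose_spec
  · exact absurd ⟨B, hB⟩ h

theorem l2_opNorm_pinv_sq_le {a b : ℕ} (A : Matrix (Fin a) (Fin b) ℝ) {s : ℝ} (hs : 0 < s)
    (hA : ‖s • (A * Aᵀ) - 1‖ < 1) : ‖pinv A‖ ^ 2 ≤ s / (1 - ‖s • (A * Aᵀ) - 1‖) := by
  set G := A * Aᵀ
  set δ := ‖s • G - 1‖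
  have hunit : IsUnit G := by
    have hsG : IsUnit (s • G) := by
      simpa using isUnit_one_sub_of_norm_lt_one (x := 1 - s • G) (by rwa [norm_sub_rev])
    exact (isUnit_smul_iff (Units.mk0 s hs.ne') G).1 hsG
  have hMP := isMoorePenroseInverse_pinv (isMoorePenroseInverse_transpose_mul_inv hunit)
  set X := (pinv A)ᵀ * pinv A
  let T : Matrix (Fin a) (Fin a) ℝ ≃⋆ₐ[ℝ] _ := toEuclideanCLM
  have hX : IsSelfAdjoint (T X) := by
    refine IsSelfAdjoint.map ?_ T
    rw [IsSelfAdjoint, star_eq_conjTranspose, conjTranspose_eq_transpose_of_trivial,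
      transpose_mul, transpose_transpose]
  have hXGX : T X * T G * T X = T X := by
    rw [← map_mul, ← map_mul, hMP.transpose_mul_self_mul_mul_eq]
  have hG : ∀ v, (1 - δ) / s * ‖v‖ ^ 2 ≤ ⟪T G v, v⟫ := fun v => by
    have := one_sub_norm_smul_sub_one_mul_sq_le_inner (T G) s v
    rw [← map_smul, ← map_one T, ← map_sub] at this
    rw [div_mul_eq_mul_div, div_le_iff₀' hs]
    exact this
  have hδ : 0 < 1 - δ := by linarith
  calc ‖pinv A‖ ^ 2 = ‖T X‖ := (l2_opNorm_transpose_mul_self _).symm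
    _ ≤ ((1 - δ) / s)⁻¹ := norm_le_inv_of_mul_mul_eq_self hX hXGX (by positivity) hG
    _ = s / (1 - δ) := inv_div _ _

theorem l2_opNorm_mul_pinv_sq_le {m p : Type*} [Fintype m] [DecidableEq m] [Fintype p]
    [DecidableEq p] {a b : ℕ} (Z : Matrix m (Fin b) ℝ) (S : Matrix m p ℝ)
    (A : Matrix (Fin a) (Fin b) ℝ) {s : ℝ} (hs : 0 < s) (hA : ‖s • (A * Aᵀ) - 1‖ < 1) :
    ‖Z * pinv A‖ ^ 2 ≤ (‖s • (Z * Zᵀ) - S * Sᵀ‖ + ‖S‖ ^ 2) / (1 - ‖s • (A * Aᵀ) - 1‖) := by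
  have hδ : 0 < 1 - ‖s • (A * Aᵀ) - 1‖ := by linarith
  calc ‖Z * pinv A‖ ^ 2 ≤ ‖Z‖ ^ 2 * ‖pinv A‖ ^ 2 := by
        rw [← mul_pow]; gcongr; exact l2_opNorm_mul _ _
    _ ≤ (‖s • (Z * Zᵀ) - S * Sᵀ‖ + ‖S‖ ^ 2) / s * (s / (1 - ‖s • (A * Aᵀ) - 1‖)) := by
        gcongr
        · exact l2_opNorm_sq_le_of_smul_mul_transpose Z S hs
        · exact l2_opNorm_pinv_sq_le A hs hA
    _ = (‖s • (Z * Zᵀ) - S * Sᵀ‖ + ‖S‖ ^ 2) / (1 - ‖s • (A * Aᵀ) - 1‖) := by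
        field_simp

theorem spec_eq_l2_opNorm {a b : ℕ} (A : Matrix (Fin a) (Fin b) ℝ) : spec A = ‖A‖ := rfl

theorem sample_covariance_bound_general
    (n k ℓ : ℕ) (hk0 : 0 < k) (hkn : k < n) (hkl : k ≤ ℓ)
    (σ : Fin n → ℝ)
    (V : Matrix (Fin n) (Fin n) ℝ)
    (W : Matrix (Fin n) (Fin ℓ) ℝ)
    (η ε : ℝ) (hε1 : ε < 1)
    (hZ : spec ((ℓ : ℝ)⁻¹ •
            ((tailDiag k σ * ((colsRight k V)ᵀ * W)) *
              (tailDiag k σ * ((colsRight k V)ᵀ * W))ᵀ) -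
            tailDiag k σ * (tailDiag k σ)ᵀ) ≤ η * spec (tailDiag k σ) ^ 2)
    (hΩ1 : spec ((ℓ : ℝ)⁻¹ •
            (((colsLeft k hkn.le V)ᵀ * W) * ((colsLeft k hkn.le V)ᵀ * W)ᵀ) - 1) ≤ ε) :
    spec (tailDiag k σ * ((colsRight k V)ᵀ * W) * pinv ((colsLeft k hkn.le V)ᵀ * W)) ^ 2 ≤
      (spec ((ℓ : ℝ)⁻¹ •
          ((tailDiag k σ * ((colsRight k V)ᵀ * W)) *
            (tailDiag k σ * ((colsRight k V)ᵀ * W))ᵀ) -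
          tailDiag k σ * (tailDiag k σ)ᵀ) + spec (tailDiag k σ) ^ 2) /
        (1 - spec ((ℓ : ℝ)⁻¹ •
          (((colsLeft k hkn.le V)ᵀ * W) * ((colsLeft k hkn.le V)ᵀ * W)ᵀ) - 1)) ∧
    (spec ((ℓ : ℝ)⁻¹ •
        ((tailDiag k σ * ((colsRight k V)ᵀ * W)) *
          (tailDiag k σ * ((colsRight k V)ᵀ * W))ᵀ) -
        tailDiag k σ * (tailDiag k σ)ᵀ) + spec (tailDiag k σ) ^ 2) /
      (1 - spec ((ℓ : ℝ)⁻¹ •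
        (((colsLeft k hkn.le V)ᵀ * W) * ((colsLeft k hkn.le V)ᵀ * W)ᵀ) - 1)) ≤
      spec (tailDiag k σ) ^ 2 * (1 + η) / (1 - ε) := by
  simp only [spec_eq_l2_opNorm] at hZ hΩ1 ⊢
  have hs : (0 : ℝ) < (ℓ : ℝ)⁻¹ := inv_pos.2 (Nat.cast_pos.2 (hk0.trans_le hkl))
  refine ⟨l2_opNorm_mul_pinv_sq_le _ _ _ hs (hΩ1.trans_lt hε1), ?_⟩
  refine div_le_div₀ ?_ (by linarith) (by linarith) (by linarith)
  linarith [(norm_nonneg _).trans hZ, sq_nonneg ‖tailDiag k σ‖]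

/-- **Lemma (sample covariance interpretation).**
If `‖(1/ℓ)ZZᵀ − Σ⊥Σ⊥ᵀ‖₂ ≤ η‖Σ⊥‖₂²` and `‖(1/ℓ)Ω̂₁Ω̂₁ᵀ − I‖₂ ≤ ε` with `η > 0`,
`ε ∈ (0,1)`, and `Z = Σ⊥Ω̂₂`, then
`‖Σ⊥Ω̂₂Ω̂₁†‖₂² ≤ (‖(1/ℓ)ZZᵀ − Σ⊥Σ⊥ᵀ‖₂ + ‖Σ⊥‖₂²)/(1 − ‖(1/ℓ)Ω̂₁Ω̂₁ᵀ − I‖₂)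
  ≤ ‖Σ⊥‖₂²(1+η)/(1−ε)`. -/
theorem sample_covariance_bound
    (m n k ℓ : ℕ) (hmn : n ≤ m) (hk0 : 0 < k) (hkn : k < n) (hkl : k ≤ ℓ) (hln : ℓ ≤ n)
    (σ : Fin n → ℝ) (hσ0 : ∀ i, 0 ≤ σ i)
    (hσmono : ∀ i j : Fin n, i ≤ j → σ j ≤ σ i)
    (hgap : σ ⟨k, hkn⟩ < σ ⟨k - 1, Nat.lt_of_le_of_lt (Nat.sub_le k 1) hkn⟩)
    (U : Matrix (Fin m) (Fin n) ℝ) (V : Matrix (Fin n) (Fin n) ℝ)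
    (hU : Uᵀ * U = 1) (hV : Vᵀ * V = 1)
    (A : Matrix (Fin m) (Fin n) ℝ) (hA : A = U * Matrix.diagonal σ * Vᵀ)
    (hperp : tailDiag k σ ≠ 0)
    (W : Matrix (Fin n) (Fin ℓ) ℝ)
    (η ε : ℝ) (hη : 0 < η) (hε0 : 0 < ε) (hε1 : ε < 1)
    (hZ : spec ((ℓ : ℝ)⁻¹ •
            ((tailDiag k σ * ((colsRight k V)ᵀ * W)) *
              (tailDiag k σ * ((colsRight k V)ᵀ * W))ᵀ) -
            tailDiag k σ * (tailDiag k σ)ᵀ) ≤ η * spec (tailDiag k σ) ^ 2)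
    (hΩ1 : spec ((ℓ : ℝ)⁻¹ •
            (((colsLeft k hkn.le V)ᵀ * W) * ((colsLeft k hkn.le V)ᵀ * W)ᵀ) - 1) ≤ ε) :
    spec (tailDiag k σ * ((colsRight k V)ᵀ * W) * pinv ((colsLeft k hkn.le V)ᵀ * W)) ^ 2 ≤
      (spec ((ℓ : ℝ)⁻¹ •
          ((tailDiag k σ * ((colsRight k V)ᵀ * W)) *
            (tailDiag k σ * ((colsRight k V)ᵀ * W))ᵀ) -
          tailDiag k σ * (tailDiag k σ)ᵀ) + spec (tailDiag k σ) ^ 2) /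
        (1 - spec ((ℓ : ℝ)⁻¹ •
          (((colsLeft k hkn.le V)ᵀ * W) * ((colsLeft k hkn.le V)ᵀ * W)ᵀ) - 1)) ∧
    (spec ((ℓ : ℝ)⁻¹ •
        ((tailDiag k σ * ((colsRight k V)ᵀ * W)) *
          (tailDiag k σ * ((colsRight k V)ᵀ * W))ᵀ) -
        tailDiag k σ * (tailDiag k σ)ᵀ) + spec (tailDiag k σ) ^ 2) /
      (1 - spec ((ℓ : ℝ)⁻¹ •
        (((colsLeft k hkn.le V)ᵀ * W) * ((colsLeft k hkn.le V)ᵀ * W)ᵀ) - 1)) ≤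
      spec (tailDiag k σ) ^ 2 * (1 + η) / (1 - ε) :=
  sample_covariance_bound_general n k ℓ hk0 hkn hkl σ V W η ε hε1 hZ hΩ1
end
end

section
/- Let Ω ∈ ℝ^{n×ℓ} be a random matrix whose columns are independent isotropic random vectors and set Z = Σ⊥ Ω̂₂ where Ω̂₂ = V⊥ᵀΩ. Then: (i) E[ ‖Z‖₂² ] ≤ ℓ ‖Σ⊥‖₂² ( 1 + 2√2 · sr(Σ⊥) ); and (ii) for every δ ∈ (0,1), P( ‖Z‖₂ ≥ (2√ℓ ‖Σ⊥‖₂/δ)(1 + 2√sr(Σ⊥)) ) ≤ δ/2. -/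
/-!
Bound the spectral norm by the Frobenius norm and work with `‖Z‖_F²`. Since `V⊥` has orthonormal
columns, `‖Σ⊥ V⊥ᵀ‖_F = ‖Σ⊥‖_F`, and for any matrix `B` and isotropic `x` one has
`E ‖B x‖² = ‖B‖_F²`; summing over the `ℓ` columns gives
`E ‖Z‖_F² = ℓ ‖Σ⊥‖_F² = ℓ ‖Σ⊥‖₂² sr(Σ⊥)`. This yields (i) at once and (ii) by Markov's inequality
for `‖Z‖_F²`, since the threshold squared is at least `16 ℓ ‖Σ⊥‖₂² sr(Σ⊥) / δ²`.
-/

open MeasureTheory Matrix ProbabilityTheory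

noncomputable section

/-- Frobenius norm of a real matrix. -/
def frob {m n : ℕ} (A : Matrix (Fin m) (Fin n) ℝ) : ℝ :=
  Real.sqrt (∑ i, ∑ j, (A i j) ^ 2)

/-- Stable rank `sr(A) = ‖A‖_F² / ‖A‖₂²`. -/
def srank {m n : ℕ} (A : Matrix (Fin m) (Fin n) ℝ) : ℝ :=
  frob A ^ 2 / spec A ^ 2

/-- Euclidean norm of a vector. -/
def vnorm {d : ℕ} (v : Fin d → ℝ) : ℝ := Real.sqrt (∑ i, v i ^ 2)

/-- The sub-Gaussian norm of `X` is at most `K`: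
`‖X‖_{ψ₂} = inf {t > 0 | E exp(X²/t²) ≤ 2} ≤ K`. -/
def SubGaussNormLE {Ω : Type} [MeasurableSpace Ω] (μ : Measure Ω) (X : Ω → ℝ) (K : ℝ) : Prop :=
  ∀ t : ℝ, K < t → ∫ ω, Real.exp ((X ω) ^ 2 / t ^ 2) ∂μ ≤ 2

/-- The sub-Gaussian norm of the random vector `x` is at most `K`:
`sup_{‖z‖=1} ‖⟨x,z⟩‖_{ψ₂} ≤ K`. -/
def VecSubGaussNormLE {Ω : Type} [MeasurableSpace Ω] (μ : Measure Ω) {d : ℕ}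
    (x : Ω → Fin d → ℝ) (K : ℝ) : Prop :=
  ∀ z : Fin d → ℝ, (∑ i, z i ^ 2) = 1 → SubGaussNormLE μ (fun ω => ∑ i, x ω i * z i) K

/-- A random vector is isotropic: `E[x] = 0` and `E[x xᵀ] = I`. -/
def Isotropic {Ω : Type} [MeasurableSpace Ω] (μ : Measure Ω) {d : ℕ}
    (x : Ω → Fin d → ℝ) : Prop :=
  (∀ i, ∫ ω, x ω i ∂μ = 0) ∧
  (∀ i j, ∫ ω, x ω i * x ω j ∂μ = if i = j then 1 else 0)

lemma frob_sq {m n : ℕ} (A : Matrix (Fin m) (Fin n) ℝ) :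
    frob A ^ 2 = ∑ i, ∑ j, A i j ^ 2 :=
  Real.sq_sqrt (by positivity)

lemma frob_sq_eq_trace {m n : ℕ} (A : Matrix (Fin m) (Fin n) ℝ) :
    frob A ^ 2 = trace (A * Aᵀ) := by
  rw [frob_sq]
  simp [trace, mul_apply, sq]

lemma frob_mul_transpose_of_orthonormal {m n p : ℕ} (A : Matrix (Fin m) (Fin n) ℝ)
    {C : Matrix (Fin p) (Fin n) ℝ} (hC : Cᵀ * C = 1) :
    frob (A * Cᵀ) = frob A := by
  have hsq : frob (A * Cᵀ) ^ 2 = frob A ^ 2 := by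
    rw [frob_sq_eq_trace, frob_sq_eq_trace, transpose_mul, transpose_transpose,
      Matrix.mul_assoc, ← Matrix.mul_assoc Cᵀ, hC, Matrix.one_mul]
  exact (sq_eq_sq₀ (Real.sqrt_nonneg _) (Real.sqrt_nonneg _)).1 hsq

lemma spec_nonneg {m n : ℕ} (A : Matrix (Fin m) (Fin n) ℝ) : 0 ≤ spec A := norm_nonneg _

lemma spec_le_frob {m n : ℕ} (A : Matrix (Fin m) (Fin n) ℝ) : spec A ≤ frob A := by
  refine ContinuousLinearMap.opNorm_le_bound _ (Real.sqrt_nonneg _) fun x => ?_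
  rw [LinearMap.coe_toContinuousLinearMap', toLpLin_apply, EuclideanSpace.norm_eq,
    EuclideanSpace.norm_eq, frob,
    ← Real.sqrt_mul (by positivity : (0 : ℝ) ≤ ∑ i, ∑ j, A i j ^ 2)]
  refine Real.sqrt_le_sqrt ?_
  simp only [Real.norm_eq_abs, sq_abs]
  rw [Finset.sum_mul]
  exact Finset.sum_le_sum fun i _ => Finset.sum_mul_sq_le_sq_mul_sq Finset.univ (A i) x.ofLp

lemma spec_pos {m n : ℕ} {A : Matrix (Fin m) (Fin n) ℝ} (hA : A ≠ 0) : 0 < spec A := by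
  refine (spec_nonneg A).lt_of_ne' fun h => hA ?_
  have hlin : toEuclideanLin A = 0 :=
    LinearMap.ext fun v => by
      simpa using congrArg (· v) (norm_eq_zero.mp h)
  exact toEuclideanLin.injective (by rw [hlin, map_zero])

lemma frob_sq_eq_spec_sq_mul_srank {m n : ℕ} {A : Matrix (Fin m) (Fin n) ℝ} (hA : A ≠ 0) :
    frob A ^ 2 = spec A ^ 2 * srank A :=
  (mul_div_cancel₀ _ (pow_ne_zero 2 (spec_pos hA).ne')).symm

lemma srank_nonneg {m n : ℕ} (A : Matrix (Fin m) (Fin n) ℝ) : 0 ≤ srank A := by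
  unfold srank; positivity

lemma colsRight_transpose_mul_self {n : ℕ} (k : ℕ) {V : Matrix (Fin n) (Fin n) ℝ}
    (hV : Vᵀ * V = 1) : (colsRight k V)ᵀ * colsRight k V = 1 := by
  ext i j
  have hij := congrFun (congrFun hV ⟨k + i.1, by omega⟩) ⟨k + j.1, by omega⟩
  simp only [mul_apply, transpose_apply, one_apply, Fin.mk.injEq, Nat.add_left_cancel_iff,
    Fin.val_inj] at hij
  simpa [mul_apply, colsRight, one_apply] using hij

lemma dotProduct_sq_eq {ι : Type*} [Fintype ι] (b y : ι → ℝ) :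
    (b ⬝ᵥ y) ^ 2 = ∑ i, ∑ j, b i * b j * (y i * y j) := by
  simp only [dotProduct, sq, Finset.sum_mul_sum]
  exact Finset.sum_congr rfl fun i _ => Finset.sum_congr rfl fun j _ => by ring

namespace Isotropic

variable {Ω : Type} [MeasurableSpace Ω] {μ : Measure Ω} {d : ℕ} {x : Ω → Fin d → ℝ}

lemma integrable_mul_apply (hx : Isotropic μ x)
    (hmeas : ∀ i, AEStronglyMeasurable (fun ω => x ω i) μ) (i j : Fin d) :
    Integrable (fun ω => x ω i * x ω j) μ := by
  have hL2 : ∀ i, MemLp (fun ω => x ω i) 2 μ := fun i =>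
    (memLp_two_iff_integrable_sq (hmeas i)).2 <|
      Integrable.of_integral_ne_zero (by simp [sq, hx.2 i i])
  exact (hL2 i).integrable_mul (hL2 j)

lemma integrable_dotProduct_sq (hx : Isotropic μ x)
    (hmeas : ∀ i, AEStronglyMeasurable (fun ω => x ω i) μ) (b : Fin d → ℝ) :
    Integrable (fun ω => (b ⬝ᵥ x ω) ^ 2) μ := by
  simp only [dotProduct_sq_eq]
  exact integrable_finsetSum _ fun i _ => integrable_finsetSum _ fun j _ =>
    (hx.integrable_mul_apply hmeas i j).const_mul (b i * b j)

lemma integral_dotProduct_sq (hx : Isotropic μ x)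
    (hmeas : ∀ i, AEStronglyMeasurable (fun ω => x ω i) μ) (b : Fin d → ℝ) :
    ∫ ω, (b ⬝ᵥ x ω) ^ 2 ∂μ = b ⬝ᵥ b := by
  have hint := fun i j => (hx.integrable_mul_apply hmeas i j).const_mul (b i * b j)
  simp only [dotProduct_sq_eq]
  rw [integral_finsetSum _ fun i _ => integrable_finsetSum _ fun j _ => hint i j]
  simp only [integral_finsetSum _ fun j _ => hint _ j, integral_const_mul, hx.2]
  simp [dotProduct]

end Isotropic

section RandomMatrix

variable {Ω : Type} [MeasurableSpace Ω] {μ : Measure Ω}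

lemma integrable_frob_mul_sq {n ℓ : ℕ} {W : Ω → Matrix (Fin n) (Fin ℓ) ℝ}
    (hW : ∀ j, Isotropic μ fun ω i => W ω i j)
    (hmeas : ∀ i j, AEStronglyMeasurable (fun ω => W ω i j) μ)
    {d : ℕ} (B : Matrix (Fin d) (Fin n) ℝ) :
    Integrable (fun ω => frob (B * W ω) ^ 2) μ := by
  simp only [frob_sq, mul_apply']
  exact integrable_finsetSum _ fun i _ => integrable_finsetSum _ fun j _ =>
    (hW j).integrable_dotProduct_sq (fun p => hmeas p j) (B i)

lemma integral_frob_mul_sq {n ℓ : ℕ} {W : Ω → Matrix (Fin n) (Fin ℓ) ℝ}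
    (hW : ∀ j, Isotropic μ fun ω i => W ω i j)
    (hmeas : ∀ i j, AEStronglyMeasurable (fun ω => W ω i j) μ)
    {d : ℕ} (B : Matrix (Fin d) (Fin n) ℝ) :
    ∫ ω, frob (B * W ω) ^ 2 ∂μ = ℓ * frob B ^ 2 := by
  have hint := fun i j => (hW j).integrable_dotProduct_sq (fun p => hmeas p j) (B i)
  simp only [frob_sq, mul_apply']
  rw [integral_finsetSum _ fun i _ => integrable_finsetSum _ fun j _ => hint i j]
  simp only [integral_finsetSum _ fun j _ => hint _ j,
    fun i j => (hW j).integral_dotProduct_sq (fun p => hmeas p j) (B i)]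
  simp [dotProduct, sq, Finset.mul_sum]

variable {m n : ℕ} {Z : Ω → Matrix (Fin m) (Fin n) ℝ}

lemma integral_spec_sq_le (hZ : Integrable (fun ω => frob (Z ω) ^ 2) μ) :
    ∫ ω, spec (Z ω) ^ 2 ∂μ ≤ ∫ ω, frob (Z ω) ^ 2 ∂μ :=
  integral_mono_of_nonneg (ae_of_all _ fun _ => sq_nonneg _) hZ
    (ae_of_all _ fun _ => pow_le_pow_left₀ (spec_nonneg _) (spec_le_frob _) 2)

lemma measure_spec_ge_le [IsFiniteMeasure μ] (hZ : Integrable (fun ω => frob (Z ω) ^ 2) μ)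
    {t : ℝ} (ht : 0 < t) :
    μ {ω | t ≤ spec (Z ω)} ≤ ENNReal.ofReal ((∫ ω, frob (Z ω) ^ 2 ∂μ) / t ^ 2) := by
  have hsub : {ω | t ≤ spec (Z ω)} ⊆ {ω | t ^ 2 ≤ frob (Z ω) ^ 2} := fun ω hω =>
    (pow_le_pow_left₀ ht.le hω 2).trans (pow_le_pow_left₀ (spec_nonneg _) (spec_le_frob _) 2)
  have hmarkov :=
    mul_meas_ge_le_integral_of_nonneg (ae_of_all _ fun ω => sq_nonneg (frob (Z ω))) hZ (t ^ 2)
  calc μ {ω | t ≤ spec (Z ω)} ≤ μ {ω | t ^ 2 ≤ frob (Z ω) ^ 2} := measure_mono hsub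
    _ = ENNReal.ofReal (μ.real {ω | t ^ 2 ≤ frob (Z ω) ^ 2}) := (ofReal_measureReal).symm
    _ ≤ _ := ENNReal.ofReal_le_ofReal ((le_div_iff₀ (by positivity)).2 (by linarith))

end RandomMatrix

lemma sq_mul_div_threshold_sq_le {a s x δ : ℝ} (ha : 0 < a) (hs : 0 < s) (hx : 0 ≤ x)
    (hδ0 : 0 < δ) (hδ1 : δ ≤ 1) :
    a ^ 2 * (s ^ 2 * x ^ 2) / (2 * a * s / δ * (1 + 2 * x)) ^ 2 ≤ δ / 2 := by
  rw [div_le_iff₀ (by positivity), div_mul_eq_mul_div, mul_pow, div_pow, mul_div_assoc]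
  field_simp
  nlinarith [mul_pos ha hs]

theorem sigma_perp_omega_moment_and_tail_general
    (n k ℓ : ℕ) (hℓ : 0 < ℓ)
    (σ : Fin n → ℝ)
    (V : Matrix (Fin n) (Fin n) ℝ)
    (hV : Vᵀ * V = 1)
    (hperp : tailDiag k σ ≠ 0)
    (Ω₀ : Type) [MeasurableSpace Ω₀] (μ : Measure Ω₀) [IsProbabilityMeasure μ]
    (W : Ω₀ → Matrix (Fin n) (Fin ℓ) ℝ)
    (hWmeas : ∀ i j, Measurable fun ω => W ω i j)
    (hWiso : ∀ j : Fin ℓ, Isotropic μ fun ω (i : Fin n) => W ω i j)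
    :
    (∫ ω, spec (tailDiag k σ * ((colsRight k V)ᵀ * W ω)) ^ 2 ∂μ ≤
        ℓ * spec (tailDiag k σ) ^ 2 * (1 + 2 * Real.sqrt 2 * srank (tailDiag k σ))) ∧
    (∀ δ : ℝ, 0 < δ → δ < 1 →
      μ {ω | 2 * Real.sqrt ℓ * spec (tailDiag k σ) / δ *
            (1 + 2 * Real.sqrt (srank (tailDiag k σ))) ≤
          spec (tailDiag k σ * ((colsRight k V)ᵀ * W ω))} ≤
        ENNReal.ofReal (δ / 2)) := by
  set D := tailDiag k σ
  simp_rw [← Matrix.mul_assoc]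
  have hmeas : ∀ i j, AEStronglyMeasurable (fun ω => W ω i j) μ := fun i j =>
    (hWmeas i j).aestronglyMeasurable
  have hint := integrable_frob_mul_sq hWiso hmeas (D * (colsRight k V)ᵀ)
  have hmoment : ∫ ω, frob (D * (colsRight k V)ᵀ * W ω) ^ 2 ∂μ = ℓ * (spec D ^ 2 * srank D) := by
    rw [integral_frob_mul_sq hWiso hmeas, frob_mul_transpose_of_orthonormal _
      (colsRight_transpose_mul_self k hV), frob_sq_eq_spec_sq_mul_srank hperp]
  have hs := spec_pos hperp
  have hL : 0 < Real.sqrt ℓ := Real.sqrt_pos.2 (Nat.cast_pos.2 hℓ)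
  refine ⟨(integral_spec_sq_le hint).trans ?_, fun δ hδ0 hδ1 => ?_⟩
  · have hsr : srank D ≤ 1 + 2 * Real.sqrt 2 * srank D := by
      nlinarith [srank_nonneg D, Real.one_lt_sqrt_two]
    rw [hmoment, ← mul_assoc]
    gcongr
  · refine (measure_spec_ge_le hint (by positivity)).trans (ENNReal.ofReal_le_ofReal ?_)
    have hratio := sq_mul_div_threshold_sq_le hL hs (Real.sqrt_nonneg (srank D)) hδ0 hδ1.le
    rwa [Real.sq_sqrt (Nat.cast_nonneg ℓ), Real.sq_sqrt (srank_nonneg D), ← hmoment] at hratio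

/-- **Lemma (second moment and tail bound for `‖Σ⊥Ω̂₂‖₂`).**
If the columns of `Ω ∈ ℝ^{n×ℓ}` are independent isotropic random vectors and
`Z = Σ⊥Ω̂₂`, then `E‖Z‖₂² ≤ ℓ‖Σ⊥‖₂²(1 + 2√2 sr(Σ⊥))`, and for every `δ ∈ (0,1)`,
`P(‖Z‖₂ ≥ (2√ℓ‖Σ⊥‖₂/δ)(1 + 2√sr(Σ⊥))) ≤ δ/2`. -/
theorem sigma_perp_omega_moment_and_tail
    (m n k ℓ : ℕ) (hmn : n ≤ m) (hk0 : 0 < k) (hkn : k < n) (hℓ : 0 < ℓ)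
    (σ : Fin n → ℝ) (hσ0 : ∀ i, 0 ≤ σ i)
    (hσmono : ∀ i j : Fin n, i ≤ j → σ j ≤ σ i)
    (U : Matrix (Fin m) (Fin n) ℝ) (V : Matrix (Fin n) (Fin n) ℝ)
    (hU : Uᵀ * U = 1) (hV : Vᵀ * V = 1)
    (A : Matrix (Fin m) (Fin n) ℝ) (hA : A = U * Matrix.diagonal σ * Vᵀ)
    (hperp : tailDiag k σ ≠ 0)
    (Ω₀ : Type) [MeasurableSpace Ω₀] (μ : Measure Ω₀) [IsProbabilityMeasure μ]
    (W : Ω₀ → Matrix (Fin n) (Fin ℓ) ℝ)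
    (hWmeas : ∀ i j, Measurable fun ω => W ω i j)
    (hWindep : iIndepFun
      (fun (j : Fin ℓ) ω (i : Fin n) => W ω i j) μ)
    (hWiso : ∀ j : Fin ℓ, Isotropic μ fun ω (i : Fin n) => W ω i j)
    :
    (∫ ω, spec (tailDiag k σ * ((colsRight k V)ᵀ * W ω)) ^ 2 ∂μ ≤
        ℓ * spec (tailDiag k σ) ^ 2 * (1 + 2 * Real.sqrt 2 * srank (tailDiag k σ))) ∧
    (∀ δ : ℝ, 0 < δ → δ < 1 →
      μ {ω | 2 * Real.sqrt ℓ * spec (tailDiag k σ) / δ *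
            (1 + 2 * Real.sqrt (srank (tailDiag k σ))) ≤
          spec (tailDiag k σ * ((colsRight k V)ᵀ * W ω))} ≤
        ENNReal.ofReal (δ / 2)) :=
  sigma_perp_omega_moment_and_tail_general n k ℓ hℓ σ V hV hperp Ω₀ μ W hWmeas hWiso

end
end
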